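/- Every vertex of the polytope P'(G,w) = { y ∈ ℝ^E : y ≥ 0, flow conservation at every vertex, ∑_e w_e y_e = 0, ∑_e y_e = 1 } is either (a) χ(C)/|C| for a simple directed cycle C with w(C) = 0, or (b) μ·χ(C₁) + μ'·χ(C₂) for a 2-cycle (C₁,C₂), where μ = w(C₂)/(w(C₂)|C₁| - w(C₁)|C₂|) and μ' = -w(C₁)/(w(C₂)|C₁| - w(C₁)|C₂|). -/

import Mathlib

open Finset

/-- A simple directed cycle, identified with its arc set: the arcs
`(f i, f (i+1))` of an injective map `f : ZMod (n+1) → V`. -/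
def IsCycle {V : Type} [DecidableEq V] (C : Finset (V × V)) : Prop :=
  ∃ (n : ℕ) (f : ZMod (n + 1) → V), Function.Injective f ∧
    C = Finset.image (fun i => (f i, f (i + 1))) Finset.univ

/-- Characteristic vector of an arc set. -/
def chi {V : Type} [DecidableEq V] (C : Finset (V × V)) : V × V → ℝ :=
  fun e => if e ∈ C then 1 else 0

/-- Membership in the polyhedron `P(G,w)` of negative-weight flows:
nonnegativity, support in `E`, flow conservation at every vertex, and
total weight `-1`. -/
def memP {V : Type} [Fintype V] [DecidableEq V] (E : Finset (V × V))
    (w : V × V → ℝ) (y : V × V → ℝ) : Prop :=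
  (∀ e, 0 ≤ y e) ∧ (∀ e, e ∉ E → y e = 0) ∧
  (∀ u : V, ∑ e ∈ E.filter (fun e => e.1 = u), y e
          = ∑ e ∈ E.filter (fun e => e.2 = u), y e) ∧
  (∑ e ∈ E, w e * y e = -1)

/-- A vertex (extreme point) of a convex set: a member which is not a proper
convex combination of two distinct members. -/
def IsVertexOf {α : Type*} [AddCommGroup α] [Module ℝ α] (P : Set α) (y : α) : Prop :=
  y ∈ P ∧ ¬ ∃ y₁ ∈ P, ∃ y₂ ∈ P, y₁ ≠ y₂ ∧
    ∃ t : ℝ, 0 < t ∧ t < 1 ∧ y = t • y₁ + (1 - t) • y₂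

/-- Membership in the polytope `P'(G,w)`: nonnegativity, support in `E`, flow
conservation, total weight `0`, and normalization `∑ y = 1`. -/
def memP' {V : Type} [Fintype V] [DecidableEq V] (E : Finset (V × V))
    (w : V × V → ℝ) (y : V × V → ℝ) : Prop :=
  (∀ e, 0 ≤ y e) ∧ (∀ e, e ∉ E → y e = 0) ∧
  (∀ u : V, ∑ e ∈ E.filter (fun e => e.1 = u), y e
          = ∑ e ∈ E.filter (fun e => e.2 = u), y e) ∧
  (∑ e ∈ E, w e * y e = 0) ∧ (∑ e ∈ E, y e = 1)

/-- A 2-cycle: a negative cycle and a positive cycle whose union contains no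
other cycle. -/
def IsTwoCycle {V : Type} [Fintype V] [DecidableEq V] (E : Finset (V × V))
    (w : V × V → ℝ) (C₁ C₂ : Finset (V × V)) : Prop :=
  IsCycle C₁ ∧ IsCycle C₂ ∧ C₁ ⊆ E ∧ C₂ ⊆ E ∧
  (∑ e ∈ C₁, w e) < 0 ∧ 0 < (∑ e ∈ C₂, w e) ∧
  ∀ C : Finset (V × V), IsCycle C → C ⊆ C₁ ∪ C₂ → C = C₁ ∨ C = C₂

/-!
A vertex `y` of `P'(G,w)` is rigid: a direction `z` supported on the support of `y` that preserves
flow conservation, `∑ w z = 0` and `∑ z = 0` must vanish. For two cycles `A`, `B` in the support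
and reals `a`, `b` with `a w(A) + b w(B) = 0`, the direction `a χ(A) + b χ(B) - (a|A| + b|B|) y`
is of this kind, so `a χ(A) + b χ(B)` is a multiple of `y`. Following arcs of positive flow gives a
cycle `C` in the support. If `w(C) = 0` then `y = χ(C)/|C|`. Otherwise subtracting a multiple of
`χ(C)` leaves a nonnegative circulation of total weight of the opposite sign, and stripping cycles
from it finds a cycle of that opposite sign, still in the support of `y`. Reading the
proportionality on an arc of `A \ B` and on one of `B \ A` shows that distinct cycles in the
support have weights of strictly opposite signs; this is the 2-cycle condition, and the
proportionality for the two cycles found is the formula for `μ` and `μ'`.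
-/

namespace IsCycle

variable {V : Type} [DecidableEq V] {C D : Finset (V × V)}

theorem card_pos (hC : IsCycle C) : 0 < C.card := by
  obtain ⟨n, f, hf, rfl⟩ := hC
  rw [card_image_of_injective _ fun i j h => hf (congrArg Prod.fst h)]
  simp [ZMod.card]

/- The positions in `D` of consecutive arcs of `C` are consecutive, so they exhaust `D`. -/
theorem eq_of_subset (hC : IsCycle C) (hD : IsCycle D) (hCD : C ⊆ D) : C = D := by
  obtain ⟨n, f, -, rfl⟩ := hC
  obtain ⟨m, g, hg, rfl⟩ := hD
  have hmem : ∀ i, ∃ b, g b = f i ∧ g (b + 1) = f (i + 1) := fun i => by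
    obtain ⟨b, -, hb⟩ := mem_image.mp (hCD (mem_image_of_mem _ (mem_univ i)))
    exact ⟨b, congrArg Prod.fst hb, congrArg Prod.snd hb⟩
  choose j hj₁ hj₂ using hmem
  have hj : ∀ k : ℕ, j k = j 0 + k := fun k => by
    induction k with
    | zero => simp
    | succ k ih =>
      have : j ((k : ZMod (n + 1)) + 1) = j k + 1 := hg (by rw [hj₁, hj₂])
      push_cast
      rw [this, ih, add_assoc]
  refine hCD.antisymm fun e he => ?_
  obtain ⟨b, -, rfl⟩ := mem_image.mp he
  have hb : j ((b - j 0).val : ℕ) = b := by rw [hj, ZMod.natCast_val, ZMod.cast_id', id,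
    add_sub_cancel]
  exact mem_image.mpr ⟨_, mem_univ _, by rw [← hb, hj₁, hj₂]⟩

end IsCycle

section Circulation

variable {V : Type} [DecidableEq V]

def circulation (E : Finset (V × V)) : Submodule ℝ (V × V → ℝ) where
  carrier := {g | (∀ e, e ∉ E → g e = 0) ∧
    ∀ u, ∑ e ∈ E.filter (fun e => e.1 = u), g e = ∑ e ∈ E.filter (fun e => e.2 = u), g e}
  add_mem' := fun ⟨hf, hf'⟩ ⟨hg, hg'⟩ =>
    ⟨fun e he => by simp [hf e he, hg e he], fun u => by simp [sum_add_distrib, hf' u, hg' u]⟩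
  zero_mem' := ⟨fun _ _ => rfl, fun _ => by simp⟩
  smul_mem' := fun c g ⟨hg, hg'⟩ =>
    ⟨fun e he => by simp [hg e he], fun u => by simp [← mul_sum, hg' u]⟩

theorem sum_chi {E C : Finset (V × V)} (hCE : C ⊆ E) : ∑ e ∈ E, chi C e = C.card := by
  simp [chi, inter_eq_right.mpr hCE]

theorem sum_mul_chi (w : V × V → ℝ) {E C : Finset (V × V)} (hCE : C ⊆ E) :
    ∑ e ∈ E, w e * chi C e = ∑ e ∈ C, w e := by
  simp [chi, mul_ite, sum_ite_mem, inter_eq_right.mpr hCE]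

theorem IsCycle.card_filter_fst_eq {C : Finset (V × V)} (hC : IsCycle C) (u : V) :
    (C.filter fun e => e.1 = u).card = (C.filter fun e => e.2 = u).card := by
  obtain ⟨n, f, hf, rfl⟩ := hC
  have harc : Function.Injective fun i => (f i, f (i + 1)) := fun i j h => hf (congrArg Prod.fst h)
  rw [filter_image, filter_image, card_image_of_injective _ harc, card_image_of_injective _ harc]
  exact card_bij (fun i _ => i - 1) (by simp) (fun _ _ _ _ h => sub_left_injective h)
    (fun b hb => ⟨b + 1, by simpa using hb, by ring⟩)

theorem IsCycle.chi_mem_circulation {E C : Finset (V × V)} (hC : IsCycle C) (hCE : C ⊆ E) :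
    chi C ∈ circulation E := by
  refine ⟨fun e he => if_neg fun h => he (hCE h), fun u => ?_⟩
  have hfilter (p : V × V → Prop) [DecidablePred p] : (E.filter p).filter (· ∈ C) = C.filter p := by
    ext e
    simp only [mem_filter]
    exact ⟨fun h => ⟨h.2, h.1.2⟩, fun h => ⟨⟨hCE h.1, h.2⟩, h.1⟩⟩
  simp only [chi, sum_boole, hfilter, hC.card_filter_fst_eq]

theorem memP'.mem_circulation [Fintype V] {E : Finset (V × V)} {w y : V × V → ℝ}
    (hy : memP' E w y) : y ∈ circulation E :=
  ⟨hy.2.1, hy.2.2.1⟩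

end Circulation

section CycleExistence

open Function

theorem exists_iterate_mem_periodicPts {V : Type} [Finite V] (f : V → V) (x : V) :
    ∃ m, f^[m] x ∈ periodicPts f := by
  obtain ⟨m, n, hmn, hne⟩ : ∃ m n, f^[m] x = f^[n] x ∧ m ≠ n := by
    simpa [Injective] using not_injective_infinite_finite (f^[·] x)
  wlog hlt : m < n generalizing m n
  · exact this n m hmn.symm hne.symm (by omega)
  refine ⟨m, mk_mem_periodicPts (n := n - m) (by omega) ?_⟩
  rw [IsPeriodicPt, IsFixedPt, ← iterate_add_apply, Nat.sub_add_cancel hlt.le, hmn]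

variable {V : Type} [DecidableEq V]

theorem exists_isCycle_of_mem_periodicPts {f : V → V} {x : V} (hx : x ∈ periodicPts f) :
    ∃ C, IsCycle C ∧ ∀ e ∈ C, ∃ k, e = (f^[k] x, f^[k + 1] x) := by
  obtain ⟨n, hn⟩ : ∃ n, minimalPeriod f x = n + 1 :=
    Nat.exists_eq_add_one.mpr (minimalPeriod_pos_of_mem_periodicPts hx)
  have hinj : Injective fun i : ZMod (n + 1) => f^[i.val] x := fun i j h =>
    ZMod.val_injective _ (iterate_injOn_Iio_minimalPeriod (by simpa [hn] using i.val_lt)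
      (by simpa [hn] using j.val_lt) h)
  refine ⟨_, ⟨n, _, hinj, rfl⟩, fun e he => ?_⟩
  obtain ⟨i, -, rfl⟩ := mem_image.mp he
  refine ⟨i.val, ?_⟩
  rw [← iterate_mod_minimalPeriod_eq (n := i.val + 1), hn, ZMod.val_add, ZMod.val_one_eq_one_mod,
    Nat.add_mod_mod]

theorem exists_isCycle_of_forall_exists_rel [Finite V] {r : V → V → Prop} {u₀ v₀ : V}
    (h₀ : r u₀ v₀) (hr : ∀ u v, r u v → ∃ w, r v w) : ∃ C, IsCycle C ∧ ∀ e ∈ C, r e.1 e.2 := by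
  have : Nonempty V := ⟨u₀⟩
  set f : V → V := fun v => Classical.epsilon (r v)
  have hf : ∀ k, r (f^[k] v₀) (f^[k + 1] v₀) := fun k => by
    induction k with
    | zero => exact Classical.epsilon_spec (hr _ _ h₀)
    | succ k ih =>
      rw [iterate_succ_apply' f (k + 1)]
      exact Classical.epsilon_spec (hr _ _ ih)
  obtain ⟨m, hm⟩ := exists_iterate_mem_periodicPts f v₀
  obtain ⟨C, hC, hCr⟩ := exists_isCycle_of_mem_periodicPts hm
  refine ⟨C, hC, fun e he => ?_⟩
  obtain ⟨k, rfl⟩ := hCr e he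
  simpa only [← iterate_add_apply, Nat.add_right_comm k 1 m] using hf (k + m)

end CycleExistence

section Flow

variable {V : Type} [DecidableEq V] {E C : Finset (V × V)} {g : V × V → ℝ}

theorem subset_of_forall_pos_of_mem_circulation (hg : g ∈ circulation E)
    (hC : ∀ e ∈ C, 0 < g e) : C ⊆ E := fun e he => by
  by_contra h
  exact (hC e he).ne' (hg.1 e h)

theorem exists_isCycle_forall_pos [Finite V] (hg : g ∈ circulation E) (hg0 : 0 ≤ g) {e₀ : V × V}
    (he₀ : 0 < g e₀) : ∃ C, IsCycle C ∧ ∀ e ∈ C, 0 < g e := by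
  refine exists_isCycle_of_forall_exists_rel (r := fun u v => 0 < g (u, v)) he₀ fun u v huv => ?_
  have huvE : (u, v) ∈ E := by_contra fun h => huv.ne' (hg.1 _ h)
  have hin : 0 < ∑ e ∈ E.filter (fun e => e.2 = v), g e :=
    huv.trans_le <| single_le_sum (fun e _ => hg0 e) (mem_filter.mpr ⟨huvE, rfl⟩)
  rw [← hg.2 v] at hin
  obtain ⟨e, he, hpos⟩ : ∃ e ∈ E.filter (fun e => e.1 = v), 0 < g e := by
    by_contra! h
    exact hin.not_ge (sum_nonpos h)
  exact ⟨e.2, by rwa [← (mem_filter.mp he).2]⟩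

theorem exists_sub_smul_chi_nonneg_support_ssubset (hg0 : 0 ≤ g) (hC : C.Nonempty)
    (hpos : ∀ e ∈ C, 0 < g e) :
    ∃ ε : ℝ, 0 < ε ∧ 0 ≤ g - ε • chi C ∧ Function.support (g - ε • chi C) ⊂ Function.support g := by
  obtain ⟨e₁, he₁, hmin⟩ := C.exists_min_image g hC
  refine ⟨g e₁, hpos e₁ he₁, fun e => ?_, ssubset_of_subset_not_superset (fun e he => ?_)
    fun hsub => ?_⟩
  · by_cases he : e ∈ C
    · simpa [chi, he] using hmin e he
    · simpa [chi, he] using hg0 e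
  · by_cases he' : e ∈ C
    · exact (hpos e he').ne'
    · simpa [chi, he'] using he
  · simpa [chi, he₁] using hsub (hpos e₁ he₁).ne'

theorem sum_mul_sub_smul_chi (w : V × V → ℝ) (ε : ℝ) (hCE : C ⊆ E) :
    ∑ e ∈ E, w e * (g - ε • chi C) e = ∑ e ∈ E, w e * g e - ε * ∑ e ∈ C, w e := by
  rw [← sum_mul_chi w hCE, mul_sum, ← sum_sub_distrib]
  exact sum_congr rfl fun e _ => by simp only [Pi.sub_apply, Pi.smul_apply, smul_eq_mul]; ring

theorem exists_isCycle_forall_pos_weight_pos [Finite V] (w : V × V → ℝ) (hg : g ∈ circulation E)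
    (hg0 : 0 ≤ g) (hw : 0 < ∑ e ∈ E, w e * g e) :
    ∃ C, IsCycle C ∧ (∀ e ∈ C, 0 < g e) ∧ 0 < ∑ e ∈ C, w e := by
  induction hs : Function.support g using WellFoundedLT.induction generalizing g with
  | ind s ih =>
  obtain ⟨e₀, he₀⟩ : ∃ e, 0 < g e := by
    by_contra! h
    exact hw.ne' (sum_eq_zero fun e _ => by rw [le_antisymm (h e) (hg0 e), mul_zero])
  obtain ⟨C, hC, hCpos⟩ := exists_isCycle_forall_pos hg hg0 he₀
  by_cases hwC : 0 < ∑ e ∈ C, w e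
  · exact ⟨C, hC, hCpos, hwC⟩
  obtain ⟨ε, hε, hg'0, hss⟩ :=
    exists_sub_smul_chi_nonneg_support_ssubset hg0 (card_pos.mp hC.card_pos) hCpos
  have hCE := subset_of_forall_pos_of_mem_circulation hg hCpos
  have hw' : 0 < ∑ e ∈ E, w e * (g - ε • chi C) e := by
    rw [sum_mul_sub_smul_chi w ε hCE]
    nlinarith
  obtain ⟨C', hC', hC'pos, hwC'⟩ := ih _ (hs ▸ hss)
    (sub_mem hg (Submodule.smul_mem _ _ (hC.chi_mem_circulation hCE))) hg'0 hw' rfl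
  exact ⟨C', hC', fun e he => (hg0 e).lt_of_ne' (hss.subset (hC'pos e he).ne'), hwC'⟩

theorem exists_isCycle_forall_pos_weight_pos_of_weight_neg [Finite V] (w : V × V → ℝ)
    (hg : g ∈ circulation E) (hg0 : 0 ≤ g) (hw : 0 ≤ ∑ e ∈ E, w e * g e) (hC : IsCycle C)
    (hCpos : ∀ e ∈ C, 0 < g e) (hwC : ∑ e ∈ C, w e < 0) :
    ∃ C', IsCycle C' ∧ (∀ e ∈ C', 0 < g e) ∧ 0 < ∑ e ∈ C', w e := by
  obtain ⟨ε, hε, hg'0, hss⟩ :=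
    exists_sub_smul_chi_nonneg_support_ssubset hg0 (card_pos.mp hC.card_pos) hCpos
  have hCE := subset_of_forall_pos_of_mem_circulation hg hCpos
  obtain ⟨C', hC', hC'pos, hwC'⟩ := exists_isCycle_forall_pos_weight_pos w
    (sub_mem hg (Submodule.smul_mem _ _ (hC.chi_mem_circulation hCE))) hg'0
    (by rw [sum_mul_sub_smul_chi w ε hCE]; nlinarith)
  exact ⟨C', hC', fun e he => (hg0 e).lt_of_ne' (hss.subset (hC'pos e he).ne'), hwC'⟩

end Flow

section Vertex

open Filter Topology

variable {V : Type} [Fintype V] [DecidableEq V] {E : Finset (V × V)} {w y : V × V → ℝ}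

/- Otherwise `y ± ε • z` are two points of `P'(G,w)` with midpoint `y`. -/
theorem eq_zero_of_isVertexOf_memP' (hv : IsVertexOf {z | memP' E w z} y) {z : V × V → ℝ}
    (hz : z ∈ circulation E) (hsupp : ∀ e, y e = 0 → z e = 0) (hwz : ∑ e ∈ E, w e * z e = 0)
    (hz1 : ∑ e ∈ E, z e = 0) : z = 0 := by
  obtain ⟨hy, hnv⟩ := hv
  have hyc : y ∈ circulation E := memP'.mem_circulation hy
  obtain ⟨hy0, -, -, hyw, hy1⟩ := hy
  have hmem : ∀ s : ℝ, (∀ e, 0 ≤ y e + s * z e) → memP' E w (y + s • z) := fun s hs =>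
    have hc : y + s • z ∈ circulation E := add_mem hyc (Submodule.smul_mem _ s hz)
    ⟨hs, hc.1, hc.2, by simp [mul_add, sum_add_distrib, mul_left_comm _ s, ← mul_sum, hyw, hwz],
      by simp [sum_add_distrib, ← mul_sum, hy1, hz1]⟩
  have hnear : ∀ᶠ s in 𝓝 (0 : ℝ), ∀ e, 0 ≤ y e + s * z e := eventually_all.mpr fun e => by
    rcases (hy0 e).eq_or_lt with h | h
    · simp [← h, hsupp e h.symm]
    · refine (Tendsto.eventually_const_lt h ?_).mono fun _ => le_of_lt
      simpa using ((continuous_mul_const (z e)).const_add (y e)).tendsto 0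
  have hnear' : ∀ᶠ s in 𝓝 (0 : ℝ), (∀ e, 0 ≤ y e + s * z e) ∧ ∀ e, 0 ≤ y e + -s * z e :=
    hnear.and ((continuous_neg.tendsto' 0 0 neg_zero).eventually hnear)
  obtain ⟨ε, ⟨hεpos, hεneg⟩, hε⟩ :=
    ((hnear'.filter_mono nhdsWithin_le_nhds).and self_mem_nhdsWithin).exists (f := 𝓝[>] (0 : ℝ))
  by_contra hz0
  refine hnv ⟨_, hmem ε hεpos, _, hmem (-ε) hεneg, fun h => hz0 ?_, 1 / 2,
    by norm_num, by norm_num, by ext; simp; ring⟩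
  funext e
  have := congrFun h e
  simp only [Pi.add_apply, Pi.smul_apply, smul_eq_mul] at this
  simpa [(show ε ≠ 0 from ne_of_gt hε)] using (by linarith : 2 * ε * z e = 0)

theorem mul_chi_add_mul_chi_eq_of_isVertexOf (hv : IsVertexOf {z | memP' E w z} y)
    {A B : Finset (V × V)} (hA : IsCycle A) (hB : IsCycle B) (hAy : ∀ e ∈ A, 0 < y e)
    (hBy : ∀ e ∈ B, 0 < y e) {a b : ℝ} (hab : a * ∑ e ∈ A, w e + b * ∑ e ∈ B, w e = 0)
    (e : V × V) : a * chi A e + b * chi B e = (a * A.card + b * B.card) * y e := by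
  obtain ⟨_, -, -, hyw, hy1⟩ := hv.1
  have hyc := hv.1.mem_circulation
  have hAE := subset_of_forall_pos_of_mem_circulation hyc hAy
  have hBE := subset_of_forall_pos_of_mem_circulation hyc hBy
  have hz := eq_zero_of_isVertexOf_memP' hv
    (z := a • chi A + b • chi B - (a * A.card + b * B.card) • y)
    (sub_mem (add_mem (Submodule.smul_mem _ a (hA.chi_mem_circulation hAE))
      (Submodule.smul_mem _ b (hB.chi_mem_circulation hBE))) (Submodule.smul_mem _ _ hyc))
    (fun e he => by
      have hA' : e ∉ A := fun h => (hAy e h).ne' he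
      have hB' : e ∉ B := fun h => (hBy e h).ne' he
      simp [chi, hA', hB', he])
    (by
      simp only [Pi.add_apply, Pi.sub_apply, Pi.smul_apply, smul_eq_mul, mul_add, mul_sub,
        sum_add_distrib, sum_sub_distrib, mul_left_comm (w _), ← mul_sum, sum_mul_chi w hAE,
        sum_mul_chi w hBE, hyw]
      linarith)
    (by
      simp only [Pi.add_apply, Pi.sub_apply, Pi.smul_apply, smul_eq_mul, sum_add_distrib,
        sum_sub_distrib, ← mul_sum, sum_chi hAE, sum_chi hBE, hy1]
      ring)
  simpa [sub_eq_zero] using congrFun hz e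

theorem eq_chi_div_card_of_isVertexOf (hv : IsVertexOf {z | memP' E w z} y)
    {C : Finset (V × V)} (hC : IsCycle C) (hCy : ∀ e ∈ C, 0 < y e) (hwC : ∑ e ∈ C, w e = 0) :
    y = fun e => chi C e / C.card := funext fun e => by
  have := mul_chi_add_mul_chi_eq_of_isVertexOf hv hC hC hCy hCy (a := 1) (b := 0) (by simp [hwC]) e
  have hcard : (C.card : ℝ) ≠ 0 := by exact_mod_cast hC.card_pos.ne'
  rw [eq_div_iff hcard]
  linarith

theorem eq_of_isVertexOf_of_weight_mul_nonneg (hv : IsVertexOf {z | memP' E w z} y)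
    {A B : Finset (V × V)} (hA : IsCycle A) (hB : IsCycle B) (hAy : ∀ e ∈ A, 0 < y e)
    (hBy : ∀ e ∈ B, 0 < y e) (hAB : 0 ≤ (∑ e ∈ A, w e) * ∑ e ∈ B, w e) : A = B := by
  have hzero : ∀ {C D : Finset (V × V)}, IsCycle C → (∀ e ∈ C, 0 < y e) →
      (∀ e ∈ D, 0 < y e) → ∑ e ∈ C, w e = 0 → D ⊆ C := fun hC hCy hDy hwC e he => by
    have := hDy e he
    rw [eq_chi_div_card_of_isVertexOf hv hC hCy hwC] at this
    by_contra h
    simp [chi, h] at this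
  by_contra hne
  obtain ⟨a, haA, haB⟩ := not_subset.mp fun h => hne (hA.eq_of_subset hB h)
  obtain ⟨b, hbB, hbA⟩ := not_subset.mp fun h => hne (hB.eq_of_subset hA h).symm
  have hcombo := mul_chi_add_mul_chi_eq_of_isVertexOf hv hA hB hAy hBy
    (a := ∑ e ∈ B, w e) (b := -∑ e ∈ A, w e) (by ring)
  have ha := hcombo a
  have hb := hcombo b
  simp only [chi, haA, haB, hbA, hbB, if_true, if_false, mul_one, mul_zero, add_zero,
    zero_add] at ha hb
  -- `w(B) = D y(a)` and `-w(A) = D y(b)`, so `w(A) w(B) = -D² y(a) y(b) ≤ 0`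
  set D := (∑ e ∈ B, w e) * A.card + (-∑ e ∈ A, w e) * B.card
  have hprod : (∑ e ∈ A, w e) * ∑ e ∈ B, w e = -(D * D * (y a * y b)) := by
    linear_combination (-∑ e ∈ B, w e) * hb - D * y b * ha
  have : (∑ e ∈ A, w e) * ∑ e ∈ B, w e = 0 :=
    le_antisymm (hprod ▸ neg_nonpos.mpr <|
      mul_nonneg (mul_self_nonneg D) (mul_pos (hAy a haA) (hBy b hbB)).le) hAB
  rcases mul_eq_zero.mp this with h | h
  · exact hbA (hzero hA hAy hBy h hbB)
  · exact haB (hzero hB hBy hAy h haA)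

theorem isTwoCycle_of_isVertexOf (hv : IsVertexOf {z | memP' E w z} y)
    {C₁ C₂ : Finset (V × V)} (hC₁ : IsCycle C₁) (hC₂ : IsCycle C₂) (hC₁y : ∀ e ∈ C₁, 0 < y e)
    (hC₂y : ∀ e ∈ C₂, 0 < y e) (hw₁ : ∑ e ∈ C₁, w e < 0) (hw₂ : 0 < ∑ e ∈ C₂, w e) :
    IsTwoCycle E w C₁ C₂ ∧ y = fun e =>
      (∑ e ∈ C₂, w e) / ((∑ e ∈ C₂, w e) * C₁.card - (∑ e ∈ C₁, w e) * C₂.card) * chi C₁ e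
      + (-(∑ e ∈ C₁, w e)) / ((∑ e ∈ C₂, w e) * C₁.card - (∑ e ∈ C₁, w e) * C₂.card)
        * chi C₂ e := by
  have hyc := hv.1.mem_circulation
  refine ⟨⟨hC₁, hC₂, subset_of_forall_pos_of_mem_circulation hyc hC₁y,
    subset_of_forall_pos_of_mem_circulation hyc hC₂y, hw₁, hw₂, fun C hC hCsub => ?_⟩, ?_⟩
  · have hCy : ∀ e ∈ C, 0 < y e := fun e he => (mem_union.mp (hCsub he)).elim (hC₁y e) (hC₂y e)
    by_cases hC₁w : 0 ≤ (∑ e ∈ C, w e) * ∑ e ∈ C₁, w e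
    · exact .inl (eq_of_isVertexOf_of_weight_mul_nonneg hv hC hC₁ hCy hC₁y hC₁w)
    · refine .inr (eq_of_isVertexOf_of_weight_mul_nonneg hv hC hC₂ hCy hC₂y ?_)
      nlinarith
  · have hcard₁ : (0 : ℝ) < C₁.card := by exact_mod_cast hC₁.card_pos
    have hcard₂ : (0 : ℝ) < C₂.card := by exact_mod_cast hC₂.card_pos
    have hD : 0 < (∑ e ∈ C₂, w e) * C₁.card - (∑ e ∈ C₁, w e) * C₂.card := by nlinarith
    funext e
    rw [div_mul_eq_mul_div, div_mul_eq_mul_div, ← add_div, eq_div_iff hD.ne',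
      mul_chi_add_mul_chi_eq_of_isVertexOf hv hC₁ hC₂ hC₁y hC₂y (by ring) e]
    ring

end Vertex

/-- every vertex of `P'(G,w)` is either `χ(C)/|C|` for a
zero-weight cycle `C`, or `μ·χ(C₁) + μ'·χ(C₂)` for a 2-cycle `(C₁, C₂)`. -/
theorem stmt_12 {V : Type} [Fintype V] [DecidableEq V]
    (E : Finset (V × V)) (w : V × V → ℝ) (y : V × V → ℝ)
    (hv : IsVertexOf {z | memP' E w z} y) :
    (∃ C : Finset (V × V), IsCycle C ∧ C ⊆ E ∧ (∑ e ∈ C, w e) = 0 ∧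
        y = fun e => chi C e / C.card) ∨
    (∃ C₁ C₂ : Finset (V × V), IsTwoCycle E w C₁ C₂ ∧
        y = fun e =>
          (∑ e ∈ C₂, w e) / ((∑ e ∈ C₂, w e) * C₁.card - (∑ e ∈ C₁, w e) * C₂.card)
            * chi C₁ e
          + (-(∑ e ∈ C₁, w e)) / ((∑ e ∈ C₂, w e) * C₁.card - (∑ e ∈ C₁, w e) * C₂.card)
            * chi C₂ e) := by
  obtain ⟨hy0, -, -, hyw, hy1⟩ := hv.1
  have hyc := hv.1.mem_circulation
  obtain ⟨e₀, he₀⟩ : ∃ e, 0 < y e := by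
    by_contra! h
    have : ∑ e ∈ E, y e = 0 := sum_eq_zero fun e _ => le_antisymm (h e) (hy0 e)
    linarith
  obtain ⟨C, hC, hCy⟩ := exists_isCycle_forall_pos hyc hy0 he₀
  rcases lt_trichotomy (∑ e ∈ C, w e) 0 with hwC | hwC | hwC
  · obtain ⟨C', hC', hC'y, hwC'⟩ :=
      exists_isCycle_forall_pos_weight_pos_of_weight_neg w hyc hy0 hyw.ge hC hCy hwC
    exact .inr ⟨C, C', isTwoCycle_of_isVertexOf hv hC hC' hCy hC'y hwC hwC'⟩
  · exact .inl ⟨C, hC, subset_of_forall_pos_of_mem_circulation hyc hCy, hwC,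
      eq_chi_div_card_of_isVertexOf hv hC hCy hwC⟩
  · obtain ⟨C', hC', hC'y, hwC'⟩ := exists_isCycle_forall_pos_weight_pos_of_weight_neg (-w) hyc
      hy0 (by simp [hyw]) hC hCy (by simpa using hwC)
    exact .inr ⟨C', C, isTwoCycle_of_isVertexOf hv hC' hC hC'y hCy (by simpa using hwC') hwC⟩
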